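/- arXiv:1403.3227 — 3 statements merged into one kernel-verified Lean document; each statement's English description precedes it below -/
import Mathlib

section
/- Let N ≥ 2 be an integer, c ∈ [0,1], and set a_n = P_n^{(N-2,0)}(2c-1)/(N+n-1)_n for n ≥ 0. Then for every real x, ∑_{n=0}^∞ (a_n/n!) · (N+2n-1)! · (-1)^n · J_{2n+N-1}(x) = (x/2)^{N-1} · ∑_{p=0}^∞ (-1)^p c^p (x/2)^{2p}/(p!)^2, where the series on the left converges absolutely. -/
/-- Pochhammer symbol `(a)_m = a (a+1) ⋯ (a+m-1)`. -/
noncomputable def poch (a : ℝ) (m : ℕ) : ℝ := ∏ i ∈ Finset.range m, (a + i)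

/-- Jacobi polynomial with nonnegative integer parameters. -/
noncomputable def jacobiP (α β n : ℕ) (x : ℝ) : ℝ :=
  ∑ m ∈ Finset.range (n + 1),
    (Nat.choose (n + α) (n - m) : ℝ) * (Nat.choose (n + β) m : ℝ) *
      ((x - 1) / 2) ^ m * ((x + 1) / 2) ^ (n - m)

/-- Bessel function of the first kind of nonnegative integer order. -/
noncomputable def besselJ (ν : ℕ) (x : ℝ) : ℝ :=
  ∑' p : ℕ, (-1 : ℝ) ^ p / ((Nat.factorial p : ℝ) * (Nat.factorial (p + ν) : ℝ)) *
    (x / 2) ^ (2 * p + ν)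

/-!
Expanding each Bessel function in its power series turns the left-hand side into an absolutely
convergent double series in `n` and `p`. Collecting the terms with `n + p = q` leaves, as the
coefficient of `(-1)^q (x/2)^(2q+N-1)`, a finite sum of Jacobi values that equals `c^q / (q!)^2`.
To evaluate it, expand `P_n^{(N-2,0)}(2c-1)` in powers of `c`: after the shift `n = k + j`, the
coefficient of `c^k` is a telescoping sum, which vanishes unless `k = q`. Absolute convergence
comes from `|P_n^{(N-2,0)}(2c-1)| ≤ C(2n+N-2, n)`, which bounds the `n`-th coefficient of the
Neumann series by `(2n+N-1)!/n!`.
-/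

open Finset Nat

theorem sum_choose_mul_choose_mul_choose (α : ℕ) {n k : ℕ} (hk : k ≤ n) :
    ∑ m ∈ range (n + 1), (n + α).choose (n - m) * (n.choose m * m.choose (n - k)) =
      n.choose k * (n + α + k).choose k := by
  have hvanish : ∀ m ∈ range (n + 1), m ∉ Ico (n - k) (n + 1) →
      (n + α).choose (n - m) * (n.choose m * m.choose (n - k)) = 0 := by
    intro m hm hm'
    have : m < n - k := by simp only [mem_Ico, mem_range] at hm hm'; omega
    simp [choose_eq_zero_of_lt this]
  rw [← sum_subset (fun m hm => mem_range.mpr (mem_Ico.mp hm).2) hvanish, sum_Ico_eq_sum_range,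
    show n + 1 - (n - k) = k + 1 by omega]
  have hterm : ∀ s ∈ range (k + 1),
      (n + α).choose (n - (n - k + s)) * (n.choose (n - k + s) * (n - k + s).choose (n - k)) =
        n.choose k * ((n + α).choose (k - s) * k.choose s) := by
    intro s hs
    have hsk : s ≤ k := Nat.lt_succ_iff.mp (mem_range.mp hs)
    rw [choose_mul (by omega : n - k ≤ n - k + s), choose_symm hk,
      show n - (n - k + s) = k - s by omega, show n - (n - k) = k by omega,
      show n - k + s - (n - k) = s by omega]
    ring
  rw [sum_congr rfl hterm, ← mul_sum, add_choose_eq, Nat.sum_antidiagonal_eq_sum_range_succ_mk,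
    ← sum_range_reflect]
  refine congrArg _ (sum_congr rfl fun s hs => ?_)
  have hsk : s ≤ k := Nat.lt_succ_iff.mp (mem_range.mp hs)
  rw [show k + 1 - 1 - s = k - s by omega, show k - (k - s) = s by omega]

theorem sub_one_pow_mul_pow {R : Type*} [CommRing R] (c : R) {m n : ℕ} (h : m ≤ n) :
    (c - 1) ^ m * c ^ (n - m) =
      ∑ k ∈ range (n + 1), (-1) ^ (n - k) * (m.choose (n - k) : R) * c ^ k := by
  rw [← sum_range_reflect]
  have hvanish : ∀ i ∈ range (n + 1), i ∉ range (m + 1) →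
      (-1) ^ (n - (n + 1 - 1 - i)) * (m.choose (n - (n + 1 - 1 - i)) : R) * c ^ (n + 1 - 1 - i)
        = 0 := by
    intro i hi hi'
    simp only [mem_range] at hi hi'
    rw [show n - (n + 1 - 1 - i) = i by omega, choose_eq_zero_of_lt (by omega : m < i)]
    simp
  rw [← sum_subset (range_subset_range.mpr (by omega)) hvanish, sub_eq_neg_add, add_pow,
    sum_mul]
  refine sum_congr rfl fun i hi => ?_
  have him : i ≤ m := Nat.lt_succ_iff.mp (mem_range.mp hi)
  rw [show n - (n + 1 - 1 - i) = i by omega, show n + 1 - 1 - i = m - i + (n - m) by omega,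
    pow_add]
  ring

theorem jacobiP_two_mul_sub_one (α n : ℕ) (c : ℝ) :
    jacobiP α 0 n (2 * c - 1) =
      ∑ k ∈ range (n + 1),
        (-1) ^ (n - k) * (n.choose k : ℝ) * ((n + α + k).choose k : ℝ) * c ^ k := by
  unfold jacobiP
  simp only [add_zero, show (2 * c - 1 - 1) / 2 = c - 1 by ring,
    show (2 * c - 1 + 1) / 2 = c by ring]
  calc ∑ m ∈ range (n + 1),
        ((n + α).choose (n - m) : ℝ) * (n.choose m : ℝ) * (c - 1) ^ m * c ^ (n - m)
      = ∑ m ∈ range (n + 1), ∑ k ∈ range (n + 1),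
          ((n + α).choose (n - m) : ℝ) * (n.choose m : ℝ) *
            ((-1) ^ (n - k) * (m.choose (n - k) : ℝ) * c ^ k) := by
        refine sum_congr rfl fun m hm => ?_
        rw [mul_assoc _ ((c - 1) ^ m),
          sub_one_pow_mul_pow c (Nat.lt_succ_iff.mp (mem_range.mp hm)), mul_sum]
    _ = ∑ k ∈ range (n + 1), (-1) ^ (n - k) * c ^ k *
          ((∑ m ∈ range (n + 1),
            (n + α).choose (n - m) * (n.choose m * m.choose (n - k)) : ℕ) : ℝ) := by
        rw [sum_comm]
        refine sum_congr rfl fun k _ => ?_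
        push_cast
        rw [mul_sum]
        exact sum_congr rfl fun m _ => by ring
    _ = _ := by
        refine sum_congr rfl fun k hk => ?_
        rw [sum_choose_mul_choose_mul_choose α (Nat.lt_succ_iff.mp (mem_range.mp hk))]
        push_cast
        ring

theorem abs_jacobiP_two_mul_sub_one_le (α n : ℕ) {c : ℝ} (hc : c ∈ Set.Icc (0 : ℝ) 1) :
    |jacobiP α 0 n (2 * c - 1)| ≤ (n + α + n).choose n := by
  have hsum := sum_choose_mul_choose_mul_choose α (le_refl n)
  simp only [Nat.sub_self, choose_zero_right, mul_one, choose_self, one_mul] at hsum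
  unfold jacobiP
  simp only [add_zero, show (2 * c - 1 - 1) / 2 = c - 1 by ring,
    show (2 * c - 1 + 1) / 2 = c by ring]
  rw [← hsum, Nat.cast_sum]
  refine (abs_sum_le_sum_abs _ _).trans (sum_le_sum fun m _ => ?_)
  obtain ⟨hc0, hc1⟩ := hc
  have h1 : |c - 1| ^ m ≤ 1 :=
    pow_le_one₀ (abs_nonneg _) (abs_le.mpr ⟨by linarith, by linarith⟩)
  have h2 : |c| ^ (n - m) ≤ 1 :=
    pow_le_one₀ (abs_nonneg _) (abs_le.mpr ⟨by linarith, by linarith⟩)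
  rw [abs_mul, abs_mul, abs_mul, abs_pow, abs_pow, Nat.abs_cast, Nat.abs_cast, Nat.cast_mul,
    mul_assoc]
  exact mul_le_of_le_one_right (by positivity) (mul_le_one₀ h1 (by positivity) h2)

theorem sum_range_alternating_factorial_eq_zero (A : ℕ) {M : ℕ} (hM : M ≠ 0) :
    ∑ j ∈ range (M + 1), (-1 : ℝ) ^ j * (A + j)! * (A + 2 * j + 1) /
      (j ! * (M - j)! * (A + M + j + 1)!) = 0 := by
  set G : ℕ → ℝ := fun j => -(-1) ^ j * j * (A + j)! / (M * j ! * (M - j)! * (A + M + j)!)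
    with hG
  have hstep : ∀ j ∈ range M, (-1 : ℝ) ^ j * (A + j)! * (A + 2 * j + 1) /
      (j ! * (M - j)! * (A + M + j + 1)!) = G (j + 1) - G j := by
    intro j hj
    obtain ⟨d, rfl⟩ : ∃ d, M = j + d + 1 := ⟨M - j - 1, by simp at hj; omega⟩
    simp only [hG, show j + d + 1 - j = d + 1 by omega, show j + d + 1 - (j + 1) = d by omega,
      show A + (j + d + 1) + (j + 1) = A + (j + d + 1) + j + 1 by omega,
      factorial_succ (A + j), factorial_succ (A + (j + d + 1) + j), factorial_succ j,
      factorial_succ d, ← add_assoc A j 1]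
    push_cast
    field_simp
    ring
  rw [sum_range_succ, sum_congr rfl hstep, sum_range_sub]
  obtain ⟨e, rfl⟩ : ∃ e, M = e + 1 := ⟨M - 1, by omega⟩
  simp only [hG, Nat.sub_self, factorial_zero,
    factorial_succ (A + (e + 1) + (e + 1))]
  push_cast
  field_simp
  ring

theorem sum_range_choose_mul_choose_mul_eq_ite (α : ℕ) {q k : ℕ} (hk : k ≤ q) :
    ∑ n ∈ range (q + 1),
      (-1 : ℝ) ^ (n - k) * (n.choose k : ℝ) * ((n + α + k).choose k : ℝ) *
        ((α + n)! * (2 * n + α + 1) / n ! / ((q - n)! * (q + n + (α + 1))!)) =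
      if k = q then 1 / (q ! : ℝ) ^ 2 else 0 := by
  have hvanish : ∀ n ∈ range (q + 1), n ∉ Ico k (q + 1) →
      (-1 : ℝ) ^ (n - k) * (n.choose k : ℝ) * ((n + α + k).choose k : ℝ) *
        ((α + n)! * (2 * n + α + 1) / n ! / ((q - n)! * (q + n + (α + 1))!)) = 0 := by
    intro n hn hn'
    have : n < k := by simp only [mem_Ico, mem_range] at hn hn'; omega
    simp [choose_eq_zero_of_lt this]
  rw [← sum_subset (fun n hn => mem_range.mpr (mem_Ico.mp hn).2) hvanish, sum_Ico_eq_sum_range,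
    show q + 1 - k = q - k + 1 by omega]
  have hterm : ∀ j ∈ range (q - k + 1),
      (-1 : ℝ) ^ (k + j - k) * ((k + j).choose k : ℝ) * ((k + j + α + k).choose k : ℝ) *
        ((α + (k + j))! * (2 * ((k + j : ℕ) : ℝ) + α + 1) / (k + j)! /
          ((q - (k + j))! * (q + (k + j) + (α + 1))!)) =
      1 / (k ! : ℝ) ^ 2 *
        ((-1 : ℝ) ^ j * ((α + 2 * k) + j)! * ((α + 2 * k : ℕ) + 2 * j + 1) /
          (j ! * (q - k - j)! * ((α + 2 * k) + (q - k) + j + 1)!)) := by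
    intro j hj
    have hjq : j ≤ q - k := Nat.lt_succ_iff.mp (mem_range.mp hj)
    rw [show k + j - k = j by omega, cast_add_choose,
      cast_choose ℝ (by omega : k ≤ k + j + α + k),
      show k + j + α + k - k = α + (k + j) by omega,
      show k + j + α + k = α + 2 * k + j by omega,
      show q - (k + j) = q - k - j by omega,
      show q + (k + j) + (α + 1) = α + 2 * k + (q - k) + j + 1 by omega]
    push_cast
    field_simp
    ring
  rw [sum_congr rfl hterm, ← mul_sum]
  split_ifs with hkq
  · subst hkq
    rw [Nat.sub_self, sum_range_one, add_zero, add_zero, factorial_succ]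
    push_cast
    field_simp
    ring
  · rw [sum_range_alternating_factorial_eq_zero (α + 2 * k) (by omega), mul_zero]

theorem sum_range_jacobiP_mul (α q : ℕ) (c : ℝ) :
    ∑ n ∈ range (q + 1), jacobiP α 0 n (2 * c - 1) *
      ((α + n)! * (2 * n + α + 1) / n ! / ((q - n)! * (q + n + (α + 1))!)) =
        c ^ q / (q ! : ℝ) ^ 2 := by
  set W : ℕ → ℝ :=
    fun n => (α + n)! * (2 * n + α + 1) / n ! / ((q - n)! * (q + n + (α + 1))!)
  have hexpand : ∀ n ∈ range (q + 1), jacobiP α 0 n (2 * c - 1) * W n =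
      ∑ k ∈ range (q + 1),
        (-1) ^ (n - k) * (n.choose k : ℝ) * ((n + α + k).choose k : ℝ) * W n * c ^ k := by
    intro n hn
    have hvanish : ∀ k ∈ range (q + 1), k ∉ range (n + 1) →
        (-1) ^ (n - k) * (n.choose k : ℝ) * ((n + α + k).choose k : ℝ) * W n * c ^ k = 0 := by
      intro k _ hk
      simp [choose_eq_zero_of_lt (by simpa using hk : n < k)]
    rw [jacobiP_two_mul_sub_one, sum_mul,
      ← sum_subset (range_subset_range.mpr (by simpa using hn)) hvanish]
    exact sum_congr rfl fun k _ => by ring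
  rw [sum_congr rfl hexpand, sum_comm]
  simp_rw [← sum_mul]
  rw [sum_congr rfl fun k hk =>
    by rw [sum_range_choose_mul_choose_mul_eq_ite α (Nat.lt_succ_iff.mp (mem_range.mp hk))],
    sum_eq_single_of_mem q (self_mem_range_succ q) fun k _ hkq => by rw [if_neg hkq, zero_mul],
    if_pos rfl, one_div, inv_mul_eq_div]

theorem Summable.tsum_eq_tsum_sum_antidiagonal {α A : Type*} [AddCommMonoid α]
    [TopologicalSpace α] [ContinuousAdd α] [T3Space α] [AddCommMonoid A] [HasAntidiagonal A]
    {f : A × A → α}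
    (hf : Summable f) : ∑' p, f p = ∑' n, ∑ kl ∈ antidiagonal n, f kl := by
  conv_rhs => congr; ext; rw [← Finset.sum_finset_coe, ← tsum_fintype (L := .unconditional _)]
  rw [← HasAntidiagonal.sigmaAntidiagonalEquivProd.tsum_eq f]
  exact (HasAntidiagonal.sigmaAntidiagonalEquivProd.summable_iff.mpr hf).tsum_sigma'
    fun n => (hasSum_fintype _).summable

noncomputable def besselTerm (ν : ℕ) (x : ℝ) (p : ℕ) : ℝ :=
  (-1) ^ p / (p ! * (p + ν)!) * (x / 2) ^ (2 * p + ν)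

theorem besselJ_eq_tsum_besselTerm (ν : ℕ) (x : ℝ) :
    besselJ ν x = ∑' p, besselTerm ν x p := rfl

section NeumannSeries

variable {b : ℕ → ℝ} {ν : ℕ} {C : ℝ}

theorem abs_mul_besselTerm_le {n : ℕ} (hbn : |b n| ≤ C * (2 * n + ν)! / n !) (x : ℝ)
    (p : ℕ) :
    |b n * (-1) ^ n * besselTerm (2 * n + ν) x p| ≤
      C * (|x| / 2) ^ ν * ((|x| / 2) ^ 2) ^ n / n ! * (((|x| / 2) ^ 2) ^ p / p !) := by
  have hpow : (|x| / 2) ^ (2 * p + (2 * n + ν)) =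
      (|x| / 2) ^ ν * ((|x| / 2) ^ 2) ^ n * ((|x| / 2) ^ 2) ^ p := by
    rw [← pow_mul, ← pow_mul, ← pow_add, ← pow_add]; ring_nf
  have hfac : ((2 * n + ν)! : ℝ) ≤ (p + (2 * n + ν))! := by
    exact_mod_cast factorial_le (by omega)
  calc |b n * (-1) ^ n * besselTerm (2 * n + ν) x p|
      = |b n| * (|x| / 2) ^ (2 * p + (2 * n + ν)) / (p ! * (p + (2 * n + ν))!) := by
        simp only [besselTerm, abs_mul, abs_div, abs_pow, abs_neg, abs_one, one_pow, abs_two,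
          Nat.abs_cast]
        ring
    _ ≤ |b n| * (|x| / 2) ^ (2 * p + (2 * n + ν)) / (p ! * (2 * n + ν)!) := by gcongr
    _ ≤ C * (2 * n + ν)! / n ! * (|x| / 2) ^ (2 * p + (2 * n + ν)) / (p ! * (2 * n + ν)!) := by
        gcongr
    _ = _ := by
        rw [hpow]
        field_simp

variable (x : ℝ)

theorem summable_abs_mul_besselTerm (hb : ∀ n, |b n| ≤ C * (2 * n + ν)! / n !) :
    Summable fun np : ℕ × ℕ => |b np.1 * (-1) ^ np.1 * besselTerm (2 * np.1 + ν) x np.2| := by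
  have hexp := Real.summable_pow_div_factorial ((|x| / 2) ^ 2)
  refine Summable.of_nonneg_of_le (fun _ => abs_nonneg _)
    (fun np => abs_mul_besselTerm_le (hb np.1) x np.2) ?_
  have : Summable fun n => C * (|x| / 2) ^ ν * ((|x| / 2) ^ 2) ^ n / n ! := by
    simpa only [mul_div_assoc] using hexp.mul_left (C * (|x| / 2) ^ ν)
  exact summable_mul_of_summable_norm
    (f := fun n => C * (|x| / 2) ^ ν * ((|x| / 2) ^ 2) ^ n / n !)
    (g := fun p => ((|x| / 2) ^ 2) ^ p / p !) this.norm hexp.norm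

theorem summable_abs_mul_besselJ (hb : ∀ n, |b n| ≤ C * (2 * n + ν)! / n !) :
    Summable fun n => |b n * (-1) ^ n * besselJ (2 * n + ν) x| := by
  have habs := summable_abs_mul_besselTerm x hb
  refine Summable.of_nonneg_of_le (fun _ => abs_nonneg _) (fun n => ?_)
    ((summable_prod_of_nonneg fun _ => abs_nonneg _).mp habs).2
  rw [besselJ_eq_tsum_besselTerm, ← tsum_mul_left]
  simpa only [Real.norm_eq_abs] using norm_tsum_le_tsum_norm (f := fun p =>
    b n * (-1) ^ n * besselTerm (2 * n + ν) x p) (habs.prod_factor n)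

theorem tsum_mul_besselJ (hb : ∀ n, |b n| ≤ C * (2 * n + ν)! / n !) :
    ∑' n, b n * (-1) ^ n * besselJ (2 * n + ν) x =
      ∑' q, (-1) ^ q * (x / 2) ^ (2 * q + ν) *
        ∑ n ∈ range (q + 1), b n / ((q - n)! * (q + n + ν)!) := by
  have hsum := (summable_abs_mul_besselTerm x hb).of_abs
  have hdiag : ∀ q, ∑ n ∈ range (q + 1), b n * (-1) ^ n * besselTerm (2 * n + ν) x (q - n) =
      (-1) ^ q * (x / 2) ^ (2 * q + ν) *
        ∑ n ∈ range (q + 1), b n / ((q - n)! * (q + n + ν)!) := by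
    intro q
    rw [mul_sum]
    refine sum_congr rfl fun n hn => ?_
    have hnq : n ≤ q := Nat.lt_succ_iff.mp (mem_range.mp hn)
    rw [besselTerm, show q - n + (2 * n + ν) = q + n + ν by omega,
      show 2 * (q - n) + (2 * n + ν) = 2 * q + ν by omega,
      show (-1 : ℝ) ^ q = (-1) ^ n * (-1) ^ (q - n) by rw [← pow_add, Nat.add_sub_cancel' hnq]]
    ring
  simp_rw [besselJ_eq_tsum_besselTerm, ← tsum_mul_left]
  rw [← hsum.tsum_prod' fun n => hsum.prod_factor n, hsum.tsum_eq_tsum_sum_antidiagonal]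
  simp_rw [Nat.sum_antidiagonal_eq_sum_range_succ_mk, hdiag]

end NeumannSeries

theorem factorial_mul_poch (k m : ℕ) : (k ! : ℝ) * poch (k + 1) m = (k + m)! := by
  have h : poch (k + 1) m = ((k + 1).ascFactorial m : ℝ) := by
    rw [poch, ascFactorial_eq_prod_range]
    push_cast
    rfl
  rw [h]
  exact_mod_cast factorial_mul_ascFactorial k m

theorem div_poch_div_factorial_mul_factorial (y : ℝ) (α n : ℕ) :
    y / poch ((α + n : ℕ) + 1) n / n ! * (α + 2 * n + 1)! =
      y * ((α + n)! * (2 * n + α + 1) / n !) := by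
  have hpoch := factorial_mul_poch (α + n) n
  rw [show α + n + n = α + 2 * n by ring] at hpoch
  have hpoch_ne : poch ((α + n : ℕ) + 1) n ≠ 0 := by
    have h : ((α + 2 * n)! : ℝ) ≠ 0 := by positivity
    exact right_ne_zero_of_mul (hpoch ▸ h)
  rw [factorial_succ, Nat.cast_mul, ← hpoch]
  field_simp
  push_cast
  ring

theorem abs_jacobiP_mul_factorial_le (α n : ℕ) {c : ℝ} (hc : c ∈ Set.Icc (0 : ℝ) 1) :
    |jacobiP α 0 n (2 * c - 1) * ((α + n)! * (2 * n + α + 1) / n !)| ≤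
      (2 * n + (α + 1))! / n ! := by
  have hchoose : ((n + α + n).choose n : ℝ) * n ! * (α + n)! = (2 * n + α)! := by
    have h := choose_mul_factorial_mul_factorial (n := n + α + n) (k := n) (by omega)
    rw [show n + α + n - n = α + n by omega] at h
    rw [show 2 * n + α = n + α + n by ring]
    exact_mod_cast h
  have hfac : ((2 * n + (α + 1))! : ℝ) = (2 * n + α + 1) * (2 * n + α)! := by
    rw [← add_assoc, factorial_succ]; push_cast; ring
  have hn : (1 : ℝ) ≤ n ! := by exact_mod_cast factorial_pos n
  calc |jacobiP α 0 n (2 * c - 1) * ((α + n)! * (2 * n + α + 1) / n !)|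
      = |jacobiP α 0 n (2 * c - 1)| * ((α + n)! * (2 * n + α + 1) / n !) := by
        rw [abs_mul,
          abs_of_nonneg (a := ((α + n)! * (2 * n + α + 1) / n ! : ℝ)) (by positivity)]
    _ ≤ (n + α + n).choose n * ((α + n)! * (2 * n + α + 1) / n !) := by
        gcongr; exact abs_jacobiP_two_mul_sub_one_le α n hc
    _ = (2 * n + (α + 1))! / n ! / n ! := by
        rw [hfac, ← hchoose]; field_simp
    _ ≤ (2 * n + (α + 1))! / n ! := div_le_self (by positivity) hn

/-- With `a_n = P_n^{(N-2,0)}(2c-1)/(N+n-1)_n`, the Neumann series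
`∑ (a_n/n!) (N+2n-1)! (-1)^n J_{2n+N-1}(x)` converges absolutely to
`(x/2)^{N-1} J_0(√c x)`. -/
theorem stmt_2 (N : ℕ) (hN : 2 ≤ N) (c : ℝ) (hc : c ∈ Set.Icc (0 : ℝ) 1) (x : ℝ) :
    Summable (fun n : ℕ =>
      |(jacobiP (N - 2) 0 n (2 * c - 1) / poch ((N : ℝ) + n - 1) n) / (Nat.factorial n : ℝ) *
        (Nat.factorial (N + 2 * n - 1) : ℝ) * (-1 : ℝ) ^ n * besselJ (2 * n + N - 1) x|) ∧
    ∑' n : ℕ,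
        (jacobiP (N - 2) 0 n (2 * c - 1) / poch ((N : ℝ) + n - 1) n) / (Nat.factorial n : ℝ) *
          (Nat.factorial (N + 2 * n - 1) : ℝ) * (-1 : ℝ) ^ n * besselJ (2 * n + N - 1) x =
      (x / 2) ^ (N - 1) *
        ∑' p : ℕ, (-1 : ℝ) ^ p * c ^ p * (x / 2) ^ (2 * p) / (Nat.factorial p : ℝ) ^ 2 := by
  obtain ⟨α, rfl⟩ : ∃ α, N = α + 2 := ⟨N - 2, by omega⟩
  have hcoeff : ∀ n : ℕ,
      jacobiP (α + 2 - 2) 0 n (2 * c - 1) / poch (((α + 2 : ℕ) : ℝ) + n - 1) n / n ! *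
        ((α + 2 + 2 * n - 1)! : ℝ) =
      jacobiP α 0 n (2 * c - 1) * ((α + n)! * (2 * n + α + 1) / n !) := by
    intro n
    rw [← div_poch_div_factorial_mul_factorial, show α + 2 + 2 * n - 1 = α + 2 * n + 1 by omega]
    push_cast
    ring_nf
  have hb (n : ℕ) : |jacobiP α 0 n (2 * c - 1) * ((α + n)! * (2 * n + α + 1) / n !)| ≤
      1 * (2 * n + (α + 1))! / n ! := by
    rw [one_mul]; exact abs_jacobiP_mul_factorial_le α n hc
  simp only [hcoeff, show ∀ n, 2 * n + (α + 2) - 1 = 2 * n + (α + 1) from fun n => by omega,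
    show α + 2 - 1 = α + 1 from rfl]
  refine ⟨summable_abs_mul_besselJ x hb, ?_⟩
  rw [tsum_mul_besselJ x hb, ← tsum_mul_left]
  refine tsum_congr fun q => ?_
  rw [sum_congr rfl fun n _ => mul_div_assoc _ _ _, sum_range_jacobiP_mul]
  ring
end

section
/- Let N ≥ 2 and n ≥ 0 be integers and λ a real number. Then λ^n · ∑_{m=0}^∞ (n+1)_m / ((N+2n)_m · m!) · λ^m = (-1)^n · (N+n-1)_{n+1} · ∫_0^1 e^{λu} P_n^{(0,N-2)}(1-2u) (1-u)^{N-2} du. (The series on the left is the confluent hypergeometric function ₁F₁(n+1; N+2n; λ) multiplied by λ^n.) -/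
open Finset Nat MeasureTheory fwdDiff

theorem poch_natCast_add_one (a m : ℕ) : poch (a + 1) m = (a + m)! / a ! := by
  induction m with
  | zero => simp [poch, factorial_ne_zero]
  | succ m ih =>
    rw [poch, prod_range_succ, ← poch, ih, ← add_assoc, factorial_succ]
    push_cast
    ring

theorem fwdDiff_iter_choose_apply_self (n k : ℕ) :
    (Δ_[1])^[n] (fun x ↦ x.choose k : ℕ → ℤ) k = k.choose n := by
  rcases le_or_gt n k with h | h
  · obtain ⟨j, rfl⟩ := Nat.exists_eq_add_of_le h
    rw [fwdDiff_iter_choose, Nat.choose_symm_add]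
  · obtain ⟨j, rfl⟩ := Nat.exists_eq_add_of_lt h
    have hconst : (Δ_[1])^[k] (fun x ↦ x.choose k : ℕ → ℤ) = fun _ ↦ 1 := by
      simpa using fwdDiff_iter_choose 0 k
    rw [Nat.choose_eq_zero_of_lt h, Nat.cast_zero, add_assoc, add_comm k,
      Function.iterate_add_apply, hconst, Function.iterate_succ_apply, fwdDiff_const,
      fwdDiff_iter_eq_sum_shift]
    simp only [smul_zero, sum_const_zero]

theorem alternating_sum_choose_mul_add_choose (n k : ℕ) :
    ∑ m ∈ range (n + 1), (-1 : ℤ) ^ m * n.choose m * (k + m).choose k = (-1) ^ n * k.choose n := by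
  have h := fwdDiff_iter_comp_add 1 (fun x ↦ x.choose k : ℕ → ℤ) k n 0
  rw [zero_add, fwdDiff_iter_choose_apply_self, fwdDiff_iter_eq_sum_shift] at h
  rw [← h, mul_sum]
  refine sum_congr rfl fun m hm ↦ ?_
  have hmn : m ≤ n := Nat.lt_succ_iff.mp (mem_range.mp hm)
  rw [smul_eq_mul, smul_eq_mul, mul_one, zero_add, add_comm m k, ← mul_assoc, ← mul_assoc,
    ← pow_add, show n + (n - m) = m + 2 * (n - m) by omega, pow_add, pow_mul]
  norm_num

theorem choose_mul_factorial_mul_factorial_add {m N : ℕ} (h : m ≤ N) (k : ℕ) :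
    N.choose m * (k + m)! * (N - m)! = N ! * k ! * (k + m).choose k := by
  refine Nat.eq_of_mul_eq_mul_right (factorial_pos m) ?_
  rw [choose_symm_add, ← add_choose_mul_factorial_mul_factorial k m,
    ← choose_mul_factorial_mul_factorial h]
  ring

theorem integral_pow_mul_one_sub_pow (a b : ℕ) :
    ∫ u in (0 : ℝ)..1, u ^ a * (1 - u) ^ b = (a ! * b ! : ℝ) / (a + b + 1)! := by
  induction b generalizing a with
  | zero =>
    simp only [pow_zero, mul_one, integral_pow, one_pow, zero_pow (succ_ne_zero a), sub_zero,
      factorial_zero, add_zero, factorial_succ]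
    push_cast
    field_simp
  | succ b ih =>
    have split : ∀ u : ℝ,
        u ^ a * (1 - u) ^ (b + 1) = u ^ a * (1 - u) ^ b - u ^ (a + 1) * (1 - u) ^ b :=
      fun u ↦ by ring
    simp_rw [split]
    rw [intervalIntegral.integral_sub (Continuous.intervalIntegrable (by fun_prop) _ _)
      (Continuous.intervalIntegrable (by fun_prop) _ _), ih, ih]
    rw [show a + 1 + b + 1 = a + b + 1 + 1 by ring, show a + (b + 1) + 1 = a + b + 1 + 1 by ring,
      Nat.factorial_succ (a + b + 1), Nat.factorial_succ a, Nat.factorial_succ b]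
    push_cast
    field_simp
    ring

theorem jacobiP_zero_one_sub_two_mul (β n : ℕ) (u : ℝ) :
    jacobiP 0 β n (1 - 2 * u) =
      ∑ m ∈ range (n + 1),
        (-1) ^ m * n.choose m * (n + β).choose m * (u ^ m * (1 - u) ^ (n - m)) := by
  refine sum_congr rfl fun m hm ↦ ?_
  rw [add_zero, Nat.choose_symm (Nat.lt_succ_iff.mp (mem_range.mp hm))]
  ring

theorem integral_pow_mul_jacobiP (β n k : ℕ) :
    ∫ u in (0 : ℝ)..1, u ^ k * (jacobiP 0 β n (1 - 2 * u) * (1 - u) ^ β) =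
      (-1) ^ n * (n + β)! * k ! * k.choose n / (n + β + k + 1)! := by
  have hterm : ∀ m ∈ range (n + 1), ∀ u : ℝ,
      u ^ k * ((-1) ^ m * n.choose m * (n + β).choose m * (u ^ m * (1 - u) ^ (n - m)) *
        (1 - u) ^ β) =
        (-1) ^ m * n.choose m * (n + β).choose m * (u ^ (k + m) * (1 - u) ^ (n + β - m)) := by
    intro m hm u
    rw [show n + β - m = n - m + β by have := mem_range.mp hm; omega]
    ring
  simp_rw [jacobiP_zero_one_sub_two_mul, sum_mul, mul_sum]
  rw [intervalIntegral.integral_finsetSum fun m _ ↦ Continuous.intervalIntegrable (by fun_prop) _ _]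
  rw [sum_congr rfl fun m hm ↦ intervalIntegral.integral_congr fun u _ ↦ hterm m hm u]
  have hsum : ∀ m ∈ range (n + 1),
      ∫ u in (0 : ℝ)..1,
        (-1) ^ m * n.choose m * (n + β).choose m * (u ^ (k + m) * (1 - u) ^ (n + β - m)) =
      (n + β)! * k ! / (n + β + k + 1)! * ((-1) ^ m * n.choose m * (k + m).choose k) := by
    intro m hm
    have hmn : m ≤ n := Nat.lt_succ_iff.mp (mem_range.mp hm)
    have hfact : ((n + β).choose m * (k + m)! * (n + β - m)! : ℝ) =
        (n + β)! * k ! * (k + m).choose k := by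
      exact_mod_cast choose_mul_factorial_mul_factorial_add (by omega : m ≤ n + β) k
    rw [intervalIntegral.integral_const_mul, integral_pow_mul_one_sub_pow,
      show k + m + (n + β - m) + 1 = n + β + k + 1 by omega]
    linear_combination (-1) ^ m * n.choose m / ((n + β + k + 1)! : ℝ) * hfact
  have halt : ∑ m ∈ range (n + 1), (-1 : ℝ) ^ m * n.choose m * (k + m).choose k =
      (-1) ^ n * k.choose n := by
    exact_mod_cast alternating_sum_choose_mul_add_choose n k
  rw [sum_congr rfl hsum, ← mul_sum, halt]
  ring

theorem continuous_jacobiP (α β n : ℕ) : Continuous (jacobiP α β n) := by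
  unfold jacobiP; fun_prop

theorem hasSum_integral_exp_mul {f : ℝ → ℝ} (hf : IntervalIntegrable f volume 0 1) (l : ℝ) :
    HasSum (fun k : ℕ ↦ l ^ k / k ! * ∫ u in (0 : ℝ)..1, u ^ k * f u)
      (∫ u in (0 : ℝ)..1, Real.exp (l * u) * f u) := by
  simp_rw [← intervalIntegral.integral_const_mul]
  have hsum : ∀ u : ℝ,
      HasSum (fun k : ℕ ↦ l ^ k / k ! * (u ^ k * f u)) (Real.exp (l * u) * f u) := by
    intro u
    rw [Real.exp_eq_exp_ℝ]
    have h := (NormedSpace.expSeries_div_hasSum_exp (l * u)).mul_right (f u)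
    rwa [show (fun k : ℕ ↦ (l * u) ^ k / k ! * f u) = fun k ↦ l ^ k / k ! * (u ^ k * f u) from
      funext fun k ↦ by ring] at h
  refine intervalIntegral.hasSum_integral_of_dominated_convergence
    (fun k u ↦ |l| ^ k / k ! * ‖f u‖) (fun k ↦ ?_) (fun k ↦ ?_) ?_ ?_ (ae_of_all _ fun u _ ↦ hsum u)
  · have hpow : Continuous fun u : ℝ ↦ u ^ k := by fun_prop
    exact ((hf.continuousOn_mul hpow.continuousOn).const_mul _).def'.aestronglyMeasurable
  · refine ae_of_all _ fun u hu ↦ ?_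
    rw [Set.uIoc_of_le zero_le_one] at hu
    have hu1 : |u| ≤ 1 := abs_le.mpr ⟨by linarith [hu.1], hu.2⟩
    rw [norm_mul, norm_mul, norm_div, norm_pow, norm_pow, Real.norm_eq_abs l,
      Real.norm_eq_abs (k ! : ℝ), Nat.abs_cast, Real.norm_eq_abs u]
    exact mul_le_mul_of_nonneg_left
      (mul_le_of_le_one_left (norm_nonneg _) (pow_le_one₀ (abs_nonneg u) hu1)) (by positivity)
  · exact ae_of_all _ fun u _ ↦ (Real.summable_pow_div_factorial |l|).mul_right _
  · simp_rw [tsum_mul_right]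
    exact hf.norm.const_mul _

theorem hasSum_integral_exp_mul_jacobiP (β n : ℕ) (l : ℝ) :
    HasSum (fun k : ℕ ↦ (-1) ^ n * (n + β)! * k.choose n * l ^ k / (n + β + k + 1)!)
      (∫ u in (0 : ℝ)..1, Real.exp (l * u) * jacobiP 0 β n (1 - 2 * u) * (1 - u) ^ β) := by
  have hf : Continuous fun u : ℝ ↦ jacobiP 0 β n (1 - 2 * u) * (1 - u) ^ β := by
    have := continuous_jacobiP 0 β n
    fun_prop
  simp_rw [mul_assoc (Real.exp _)]
  refine (hasSum_integral_exp_mul (hf.intervalIntegrable 0 1) l).congr_fun fun k ↦ ?_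
  rw [integral_pow_mul_jacobiP]
  field_simp

theorem hasSum_neg_one_pow_mul_poch_mul_integral_exp_mul_jacobiP (β n : ℕ) (l : ℝ) :
    HasSum (fun m : ℕ ↦ (m + n).choose n * l ^ (m + n) * (β + 2 * n + 1)! / (β + 2 * n + 1 + m)!)
      ((-1) ^ n * poch (((β + 2 : ℕ) : ℝ) + n - 1) (n + 1) *
        ∫ u in (0 : ℝ)..1, Real.exp (l * u) * jacobiP 0 β n (1 - 2 * u) * (1 - u) ^ β) := by
  set g : ℕ → ℝ := fun k ↦ k.choose n * l ^ k * (β + 2 * n + 1)! / (n + β + k + 1)!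
  have hpoch : poch (((β + 2 : ℕ) : ℝ) + n - 1) (n + 1) = (β + 2 * n + 1)! / (β + n)! := by
    rw [show ((β + 2 : ℕ) : ℝ) + n - 1 = ((β + n : ℕ) : ℝ) + 1 by push_cast; ring,
      poch_natCast_add_one, show β + n + (n + 1) = β + 2 * n + 1 by ring]
  have hterm : ∀ k : ℕ, (-1) ^ n * poch (((β + 2 : ℕ) : ℝ) + n - 1) (n + 1) *
      ((-1) ^ n * (n + β)! * k.choose n * l ^ k / (n + β + k + 1)!) = g k := by
    intro k
    simp only [g]
    rw [hpoch, add_comm n β]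
    field_simp
    rw [← pow_mul, mul_comm n 2, pow_mul, neg_one_sq, one_pow, one_mul]
  have hg := (hasSum_integral_exp_mul_jacobiP β n l).mul_left
    ((-1) ^ n * poch (((β + 2 : ℕ) : ℝ) + n - 1) (n + 1))
  simp only [hterm] at hg
  have hshift := (hasSum_nat_add_iff' n).mpr hg
  have hhead : ∑ k ∈ range n, g k = 0 :=
    sum_eq_zero fun k hk ↦ by simp [g, choose_eq_zero_of_lt (mem_range.mp hk)]
  rw [hhead, sub_zero] at hshift
  refine hshift.congr_fun fun m ↦ ?_
  simp only [g, show n + β + (m + n) + 1 = β + 2 * n + 1 + m by ring]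

/-- `λ^n ₁F₁(n+1; N+2n; λ) = (-1)^n (N+n-1)_{n+1} ∫_0^1 e^{λu} P_n^{(0,N-2)}(1-2u) (1-u)^{N-2} du`. -/
theorem stmt_7 (N : ℕ) (hN : 2 ≤ N) (n : ℕ) (l : ℝ) :
    l ^ n * ∑' m : ℕ,
        poch ((n : ℝ) + 1) m / (poch ((N : ℝ) + 2 * n) m * (Nat.factorial m : ℝ)) * l ^ m =
      (-1 : ℝ) ^ n * poch ((N : ℝ) + n - 1) (n + 1) *
        ∫ u in (0 : ℝ)..1, Real.exp (l * u) * jacobiP 0 (N - 2) n (1 - 2 * u) *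
          (1 - u) ^ (N - 2) := by
  obtain ⟨β, rfl⟩ := Nat.exists_eq_add_of_le' hN
  rw [Nat.add_sub_cancel,
    ← (hasSum_neg_one_pow_mul_poch_mul_integral_exp_mul_jacobiP β n l).tsum_eq, ← tsum_mul_left]
  congr 1 with m
  have hchoose : ((m + n).choose n * m ! * n ! : ℝ) = (n + m)! := by
    rw [add_comm n m]; exact_mod_cast add_choose_mul_factorial_mul_factorial m n
  rw [show ((β + 2 : ℕ) : ℝ) + 2 * n = ((β + 2 * n + 1 : ℕ) : ℝ) + 1 by push_cast; ring,
    poch_natCast_add_one, poch_natCast_add_one, ← hchoose]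
  field_simp
  ring
end

section
/- Let N ≥ 2 and 1 ≤ k ≤ N-1 be integers, let g : ℝ^k → ℝ be twice continuously differentiable on an open set containing the open simplex Σ_k, and set f(u) = g(u)·s_k(u) with s_k(u) = (1-u_1-⋯-u_k)^{N-k-1}. Then for every u ∈ Σ_k: k(N-k-1)·f(u) + ∑_{i=1}^k (1+(N-2k-2)u_i)·∂_i f(u) + ∑_{i=1}^k u_i(1-u_i)·∂_{ii} f(u) − ∑_{i≠j} u_i u_j·∂_{ij} f(u) = s_k(u) · [ ∑_{i=1}^k (1-N u_i)·∂_i g(u) + ∑_{i=1}^k u_i(1-u_i)·∂_{ii} g(u) − ∑_{i≠j} u_i u_j·∂_{ij} g(u) ]. -/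
/-!
Write `w = 1 - ∑ uᵢ` and `m = N - k - 1`, so that `f = g wᵐ` and `w > 0` on the simplex. The
product rule gives `∂ᵢf = wᵐ (∂ᵢg - m g / w)` and
`∂ᵢ∂ⱼf = wᵐ (∂ᵢ∂ⱼg - (m / w)(∂ᵢg + ∂ⱼg) + m(m-1) g / w²)`. In the second-order part the middle
term contributes `-2m ∑ uᵢ ∂ᵢg`, which turns the drift `1 + (N-2k-2)uᵢ` into `1 - N uᵢ`, and the
terms without derivatives of `g` add up to `m g (∑ uᵢ / w) (m - 1 - k - (N-2k-2)) = 0`.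
-/

/-- Partial derivative in the `i`-th coordinate direction. -/
noncomputable def pd {k : ℕ} (f : (Fin k → ℝ) → ℝ) (i : Fin k) (u : Fin k → ℝ) : ℝ :=
  fderiv ℝ f u (Pi.single i 1)

/-- The open standard simplex of `ℝ^k`. -/
def stdSimplex' (k : ℕ) : Set (Fin k → ℝ) :=
  {u | (∀ i, 0 < u i) ∧ ∑ i, u i < 1}

/-- The Dirichlet density `s_k(u) = (1-u_1-⋯-u_k)^{N-k-1}` on `ℝ^k`. -/
noncomputable def sk (N k : ℕ) (u : Fin k → ℝ) : ℝ := (1 - ∑ i, u i) ^ (N - k - 1)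

/-- The product `f = g ⋅ s_k`. -/
noncomputable def fprod (N k : ℕ) (g : (Fin k → ℝ) → ℝ) (u : Fin k → ℝ) : ℝ :=
  g u * sk N k u

open Finset Filter Topology

section PartialDerivatives

variable {k : ℕ} {φ ψ : (Fin k → ℝ) → ℝ} {x : Fin k → ℝ}

theorem pd_mul (hφ : DifferentiableAt ℝ φ x) (hψ : DifferentiableAt ℝ ψ x) (i : Fin k) :
    pd (fun y => φ y * ψ y) i x = pd φ i x * ψ x + φ x * pd ψ i x := by
  simp only [pd, fderiv_fun_mul hφ hψ, FunLike.coe_add, FunLike.coe_smul,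
    Pi.add_apply, Pi.smul_apply, smul_eq_mul]
  ring

theorem pd_sub (hφ : DifferentiableAt ℝ φ x) (hψ : DifferentiableAt ℝ ψ x) (i : Fin k) :
    pd (fun y => φ y - ψ y) i x = pd φ i x - pd ψ i x := by
  simp only [pd, fderiv_fun_sub hφ hψ, FunLike.coe_sub, Pi.sub_apply]

theorem pd_const_mul (c : ℝ) (hφ : DifferentiableAt ℝ φ x) (i : Fin k) :
    pd (fun y => c * φ y) i x = c * pd φ i x := by
  simp only [pd, fderiv_const_mul hφ, FunLike.coe_smul, Pi.smul_apply, smul_eq_mul]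

theorem Filter.EventuallyEq.pd_eq (h : φ =ᶠ[𝓝 x] ψ) (i : Fin k) : pd φ i x = pd ψ i x := by
  rw [pd, pd, h.fderiv_eq]

theorem ContDiffAt.differentiableAt_pd (h : ContDiffAt ℝ 2 φ x) (i : Fin k) :
    DifferentiableAt ℝ (pd φ i) x :=
  ((h.fderiv_right one_add_one_eq_two.le).differentiableAt one_ne_zero).clm_apply
    (differentiableAt_const _)

theorem hasFDerivAt_one_sub_sum_zpow (n : ℤ) (hx : 1 - ∑ j, x j ≠ 0) :
    HasFDerivAt (fun y : Fin k → ℝ => (1 - ∑ j, y j) ^ n)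
      ((n * (1 - ∑ j, x j) ^ (n - 1)) • -∑ j : Fin k, ContinuousLinearMap.proj (R := ℝ) j) x := by
  have hlin : HasFDerivAt (fun y : Fin k → ℝ => 1 - ∑ j, y j)
      (-∑ j : Fin k, ContinuousLinearMap.proj (R := ℝ) j) x := by
    simpa using (hasFDerivAt_const (1 : ℝ) x).fun_sub
      (HasFDerivAt.fun_sum (u := univ) fun j _ => hasFDerivAt_apply (𝕜 := ℝ) j x)
  exact (hasDerivAt_zpow n _ (.inl hx)).comp_hasFDerivAt x hlin

theorem differentiableAt_one_sub_sum_zpow (n : ℤ) (hx : 1 - ∑ j, x j ≠ 0) :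
    DifferentiableAt ℝ (fun y : Fin k → ℝ => (1 - ∑ j, y j) ^ n) x :=
  (hasFDerivAt_one_sub_sum_zpow n hx).differentiableAt

theorem pd_mul_one_sub_sum_zpow (hφ : DifferentiableAt ℝ φ x) (hx : 1 - ∑ j, x j ≠ 0) (n : ℤ)
    (i : Fin k) :
    pd (fun y => φ y * (1 - ∑ j, y j) ^ n) i x =
      pd φ i x * (1 - ∑ j, x j) ^ n - n * (φ x * (1 - ∑ j, x j) ^ (n - 1)) := by
  have hw := hasFDerivAt_one_sub_sum_zpow n hx
  rw [pd_mul hφ hw.differentiableAt]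
  unfold pd
  rw [hw.fderiv]
  simp only [smul_neg, neg_apply, smul_apply, _root_.sum_apply, ContinuousLinearMap.proj_apply,
    Pi.single_apply, sum_ite_eq', mem_univ, ↓reduceIte, smul_eq_mul, mul_one, mul_neg]
  ring

/- Integer exponents keep `∂ᵢ (w ^ n) = -n w ^ (n - 1)` free of truncated subtraction in `n - 1`. -/
theorem fprod_eq_mul_zpow (N : ℕ) (g : (Fin k → ℝ) → ℝ) :
    fprod N k g = fun y => g y * (1 - ∑ j, y j) ^ ((N - k - 1 : ℕ) : ℤ) := by
  funext y
  rw [fprod, sk, zpow_natCast]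

theorem pd_fprod (N : ℕ) {g : (Fin k → ℝ) → ℝ} (hg : DifferentiableAt ℝ g x)
    (hx : 1 - ∑ j, x j ≠ 0) (i : Fin k) :
    pd (fprod N k g) i x =
      sk N k x * (pd g i x - (N - k - 1 : ℕ) * g x / (1 - ∑ j, x j)) := by
  rw [fprod_eq_mul_zpow, pd_mul_one_sub_sum_zpow hg hx, zpow_sub_one₀ hx, zpow_natCast, sk]
  push_cast
  field_simp

theorem pd_pd_fprod (N : ℕ) {g : (Fin k → ℝ) → ℝ} (hg : ContDiffAt ℝ 2 g x)
    (hx : 1 - ∑ j, x j ≠ 0) (i j : Fin k) :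
    pd (pd (fprod N k g) j) i x =
      sk N k x * (pd (pd g j) i x - (N - k - 1 : ℕ) / (1 - ∑ j, x j) * (pd g i x + pd g j x) +
        (N - k - 1 : ℕ) * ((N - k - 1 : ℕ) - 1) * g x / (1 - ∑ j, x j) ^ 2) := by
  have hg_near : ∀ᶠ y in 𝓝 x, DifferentiableAt ℝ g y :=
    (hg.eventually (by simp)).mono fun y hy => hy.differentiableAt two_ne_zero
  have hw_near : ∀ᶠ y in 𝓝 x, 1 - ∑ j, y j ≠ 0 :=
    (continuous_const.sub (continuous_finsetSum _ fun j _ => continuous_apply j)).continuousAt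
      |>.eventually_ne hx
  have hfirst : pd (fprod N k g) j =ᶠ[𝓝 x]
      fun y => pd g j y * (1 - ∑ j, y j) ^ ((N - k - 1 : ℕ) : ℤ) -
        ((N - k - 1 : ℕ) : ℤ) * (g y * (1 - ∑ j, y j) ^ (((N - k - 1 : ℕ) : ℤ) - 1)) := by
    filter_upwards [hg_near, hw_near] with y hgy hwy
    rw [fprod_eq_mul_zpow, pd_mul_one_sub_sum_zpow hgy hwy]
  have hdg := hg.differentiableAt two_ne_zero
  have hdw := differentiableAt_one_sub_sum_zpow (N - k - 1 : ℕ) hx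
  have hdw' := differentiableAt_one_sub_sum_zpow ((N - k - 1 : ℕ) - 1) hx
  rw [hfirst.pd_eq, pd_sub ((hg.differentiableAt_pd j).fun_mul hdw)
      ((hdg.fun_mul hdw').const_mul _), pd_const_mul _ (hdg.fun_mul hdw'),
    pd_mul_one_sub_sum_zpow (hg.differentiableAt_pd j) hx, pd_mul_one_sub_sum_zpow hdg hx]
  simp only [zpow_sub_one₀ hx, zpow_natCast, sk]
  push_cast
  field_simp
  ring

end PartialDerivatives

section JacobiOperator

variable {ι : Type*} [Fintype ι] [DecidableEq ι]

theorem sum_sum_ite_ne {M : Type*} [AddCommGroup M] (F : ι → ι → M) :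
    ∑ i, ∑ j, (if i ≠ j then F i j else 0) = ∑ i, ∑ j, F i j - ∑ i, F i i := by
  rw [← sum_sub_distrib]
  refine sum_congr rfl fun i _ => ?_
  rw [← sum_filter, filter_ne, sum_erase_eq_sub (mem_univ i)]

theorem jacobi_secondOrder_of_weighted_hessian (u : ι → ℝ) (P c r : ℝ) (X : ι → ι → ℝ)
    (D : ι → ℝ) :
    (∑ i, u i * (1 - u i) * (P * (X i i - c * (D i + D i) + r)) -
      ∑ i, ∑ j, if i ≠ j then u i * u j * (P * (X i j - c * (D i + D j) + r)) else 0) =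
    P * ((∑ i, u i * (1 - u i) * X i i - ∑ i, ∑ j, if i ≠ j then u i * u j * X i j else 0) -
      2 * c * (1 - ∑ i, u i) * ∑ i, u i * D i + r * (∑ i, u i) * (1 - ∑ i, u i)) := by
  have hdiag : ∀ i, u i * (1 - u i) * (P * (X i i - c * (D i + D i) + r)) =
      P * (u i * (1 - u i) * X i i) - 2 * P * c * (u i * D i) + P * c * (u i * D i * u i) +
        P * c * (u i * (u i * D i)) + P * r * u i - P * r * (u i * u i) := fun i => by ring
  have hoff : ∀ i j, u i * u j * (P * (X i j - c * (D i + D j) + r)) =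
      P * (u i * u j * X i j) - P * c * (u i * D i * u j) - P * c * (u i * (u j * D j)) +
        P * r * (u i * u j) := fun i j => by ring
  rw [sum_sum_ite_ne, sum_sum_ite_ne]
  simp only [hdiag, hoff, sum_add_distrib, sum_sub_distrib, ← mul_sum, ← sum_mul]
  ring

theorem jacobi_conj_of_weighted_derivatives (u : ι → ℝ) (n G P : ℝ) (Df Dg : ι → ℝ)
    (Xf Xg : ι → ι → ℝ) (hw : 1 - ∑ i, u i ≠ 0)
    (hD : ∀ i, Df i = P * (Dg i - (n - Fintype.card ι - 1) * G / (1 - ∑ i, u i)))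
    (hX : ∀ i j, Xf i j = P * (Xg i j - (n - Fintype.card ι - 1) / (1 - ∑ i, u i) * (Dg i + Dg j) +
      (n - Fintype.card ι - 1) * (n - Fintype.card ι - 2) * G / (1 - ∑ i, u i) ^ 2)) :
    Fintype.card ι * (n - Fintype.card ι - 1) * (G * P) +
        (∑ i, (1 + (n - 2 * Fintype.card ι - 2) * u i) * Df i) +
        (∑ i, u i * (1 - u i) * Xf i i) -
        (∑ i, ∑ j, if i ≠ j then u i * u j * Xf i j else 0) =
      P * ((∑ i, (1 - n * u i) * Dg i) + (∑ i, u i * (1 - u i) * Xg i i) -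
          (∑ i, ∑ j, if i ≠ j then u i * u j * Xg i j else 0)) := by
  simp only [hD, hX]
  rw [add_sub_assoc, add_sub_assoc, jacobi_secondOrder_of_weighted_hessian]
  have hfirst : ∀ a q : ℝ, ∑ i, (1 + a * u i) * (P * (Dg i - q)) =
      P * (∑ i, Dg i + a * ∑ i, u i * Dg i - q * (Fintype.card ι + a * ∑ i, u i)) := by
    intro a q
    have hsplit : ∀ i, (1 + a * u i) * (P * (Dg i - q)) =
        P * Dg i + a * (P * (u i * Dg i)) - P * q - a * (P * q * u i) := fun i => by ring
    simp only [hsplit, sum_add_distrib, sum_sub_distrib, ← mul_sum, sum_const, card_univ,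
      nsmul_eq_mul]
    ring
  have hrhs : ∑ i, (1 - n * u i) * Dg i = ∑ i, Dg i - n * ∑ i, u i * Dg i := by
    simp only [sub_mul, one_mul, mul_assoc, sum_sub_distrib, ← mul_sum]
  rw [hfirst, hrhs]
  field_simp
  ring

end JacobiOperator

theorem stmt_10_general (N k : ℕ) (hN : 2 ≤ N) (hk2 : k ≤ N - 1)
    (g : (Fin k → ℝ) → ℝ) (U : Set (Fin k → ℝ)) (hU : IsOpen U)
    (hUs : stdSimplex' k ⊆ U) (hg : ContDiffOn ℝ 2 g U)
    (u : Fin k → ℝ) (hu : u ∈ stdSimplex' k) :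
    (k : ℝ) * ((N : ℝ) - k - 1) * fprod N k g u +
        (∑ i, (1 + ((N : ℝ) - 2 * k - 2) * u i) * pd (fprod N k g) i u) +
        (∑ i, u i * (1 - u i) * pd (pd (fprod N k g) i) i u) -
        (∑ i, ∑ j, if i ≠ j then u i * u j * pd (pd (fprod N k g) j) i u else 0) =
      sk N k u *
        ((∑ i, (1 - (N : ℝ) * u i) * pd g i u) +
          (∑ i, u i * (1 - u i) * pd (pd g i) i u) -
          (∑ i, ∑ j, if i ≠ j then u i * u j * pd (pd g j) i u else 0)) := by
  have hw : 1 - ∑ i, u i ≠ 0 := (sub_pos.2 hu.2).ne'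
  have hgu : ContDiffAt ℝ 2 g u := hg.contDiffAt (hU.mem_nhds (hUs hu))
  have hm : ((N - k - 1 : ℕ) : ℝ) = N - k - 1 := by
    rw [Nat.sub_sub, Nat.cast_sub (by omega)]
    push_cast
    ring
  have h := jacobi_conj_of_weighted_derivatives u N (g u) (sk N k u)
    (fun i => pd (fprod N k g) i u) (fun i => pd g i u)
    (fun i j => pd (pd (fprod N k g) j) i u) (fun i j => pd (pd g j) i u) hw
    (fun i => by rw [pd_fprod N (hgu.differentiableAt two_ne_zero) hw, hm, Fintype.card_fin])
    (fun i j => by rw [pd_pd_fprod N hgu hw, hm, Fintype.card_fin]; ring)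
  rw [Fintype.card_fin] at h
  exact h

/-- Conjugating the operator
`k(N-k-1) + ∑_i (1+(N-2k-2)u_i)∂_i + ∑_i u_i(1-u_i)∂_{ii} - ∑_{i≠j} u_i u_j ∂_{ij}`
by the Dirichlet density `s_k` produces the generalized Jacobi operator on the simplex. -/
theorem stmt_10 (N k : ℕ) (hN : 2 ≤ N) (hk1 : 1 ≤ k) (hk2 : k ≤ N - 1)
    (g : (Fin k → ℝ) → ℝ) (U : Set (Fin k → ℝ)) (hU : IsOpen U)
    (hUs : stdSimplex' k ⊆ U) (hg : ContDiffOn ℝ 2 g U)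
    (u : Fin k → ℝ) (hu : u ∈ stdSimplex' k) :
    (k : ℝ) * ((N : ℝ) - k - 1) * fprod N k g u +
        (∑ i, (1 + ((N : ℝ) - 2 * k - 2) * u i) * pd (fprod N k g) i u) +
        (∑ i, u i * (1 - u i) * pd (pd (fprod N k g) i) i u) -
        (∑ i, ∑ j, if i ≠ j then u i * u j * pd (pd (fprod N k g) j) i u else 0) =
      sk N k u *
        ((∑ i, (1 - (N : ℝ) * u i) * pd g i u) +
          (∑ i, u i * (1 - u i) * pd (pd g i) i u) -
          (∑ i, ∑ j, if i ≠ j then u i * u j * pd (pd g j) i u else 0)) :=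
  stmt_10_general N k hN hk2 g U hU hUs hg u hu
end
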